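/- arXiv:1309.6656 — 3 statements merged into one kernel-verified Lean document; each statement's English description precedes it below -/
import Mathlib

section
/- If h : ℂ → ℝ is a harmonic function on all of ℂ that is bounded from below, then h is constant. -/
/-! If `Re F ≥ M` for an entire `F`, then `exp (-F)` is entire and bounded by `exp (-M)`, hence
constant by Liouville; taking absolute values, `Re F` is constant. -/

open Complex Set

theorem isBounded_range_cexp_neg_of_forall_le_re {α : Type*} {f : α → ℂ} {M : ℝ}
    (hM : ∀ x, M ≤ (f x).re) : Bornology.IsBounded (range fun x => cexp (-f x)) := by
  refine isBounded_iff_forall_norm_le.2 ⟨Real.exp (-M), ?_⟩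
  rintro _ ⟨x, rfl⟩
  rw [norm_exp, neg_re, Real.exp_le_exp, neg_le_neg_iff]
  exact hM x

theorem Differentiable.re_eq_of_forall_le_re {E : Type*} [NormedAddCommGroup E]
    [NormedSpace ℂ E] {F : E → ℂ} (hF : Differentiable ℂ F) {M : ℝ}
    (hM : ∀ z, M ≤ (F z).re) (z w : E) : (F z).re = (F w).re := by
  have hconst : cexp (-F z) = cexp (-F w) :=
    hF.neg.cexp.apply_eq_apply_of_bounded (isBounded_range_cexp_neg_of_forall_le_re hM) z w
  have hnorm := congrArg (‖·‖) hconst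
  rw [norm_exp, norm_exp, Real.exp_eq_exp, neg_re, neg_re, neg_inj] at hnorm
  exact hnorm

/-- A harmonic function on all of ℂ (i.e. globally the real part of an entire function,
since ℂ is simply connected) that is bounded from below is constant. -/
theorem harmonic_bounded_below_constant (h : ℂ → ℝ) (F : ℂ → ℂ)
    (hF : Differentiable ℂ F) (hhF : ∀ x, h x = (F x).re)
    (M : ℝ) (hbd : ∀ x, M ≤ h x) :
    ∀ x y : ℂ, h x = h y := by
  intro x y
  rw [hhF, hhF]
  exact hF.re_eq_of_forall_le_re (fun z => hhF z ▸ hbd z) x y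
end

section
/- Let P_{c,a}(w) = w^d/d - c·w^{d-1}/(d-1) + a^d with d ≥ 3 and c fixed. Then for |a| sufficiently large, the orbit of the critical point c under P_{c,a} tends to infinity; in particular c is not preperiodic for P_{c,a}. -/
/-!
At the critical point, `P_{c,a}(c) = a^d - c^d/(d(d-1))`, whose modulus is roughly `|a|^d` and so,
for `|a|` large, exceeds the radius `R = d(|c| + |a| + 2)`. Beyond `R` the leading term `w^d/d`
dominates and `|P_{c,a}(w)| ≥ 2|w|`, so the orbit of `c` grows geometrically. A preperiodic orbit
revisits one point along an arithmetic progression of times, which is incompatible with escape.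
-/

open Filter Function

theorem Function.not_exists_iterate_eq_of_tendsto_atTop {α β : Type*} [Preorder β] [NoTopOrder β]
    {f : α → α} {x : α} {g : α → β} (h : Tendsto (fun n => g (f^[n] x)) atTop atTop) :
    ¬ ∃ i j, i < j ∧ f^[i] x = f^[j] x := by
  rintro ⟨i, j, hij, hx⟩
  have hper : IsPeriodicPt f (j - i) (f^[i] x) := by
    rw [IsPeriodicPt, IsFixedPt, ← iterate_add_apply, Nat.sub_add_cancel hij.le, hx]
  have hsub : Tendsto (fun k => (j - i) * k + i) atTop atTop :=
    tendsto_atTop_mono (fun k => (Nat.le_mul_of_pos_left k (Nat.sub_pos_of_lt hij)).trans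
      (Nat.le_add_right _ _)) tendsto_id
  refine not_tendsto_const_atTop (g (f^[i] x)) atTop ((h.comp hsub).congr fun k => ?_)
  simp only [comp_apply, iterate_add_apply, (hper.mul_const k).eq]

theorem tendsto_norm_iterate_atTop_of_expanding {E : Type*} [Norm E] {f : E → E} {q R : ℝ}
    (hq : 1 < q) (hR : 0 < R) (hf : ∀ w, R ≤ ‖w‖ → q * ‖w‖ ≤ ‖f w‖) {x : E} (hx : R ≤ ‖x‖) :
    Tendsto (fun n => ‖f^[n] x‖) atTop atTop := by
  have hgrowth : ∀ n : ℕ, q ^ n * R ≤ ‖f^[n] x‖ := by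
    intro n
    induction n with
    | zero => simpa using hx
    | succ n ih =>
      have hRn : R ≤ ‖f^[n] x‖ := le_trans (le_mul_of_one_le_left hR.le (one_le_pow₀ hq.le)) ih
      calc q ^ (n + 1) * R = q * (q ^ n * R) := by ring
        _ ≤ q * ‖f^[n] x‖ := by gcongr
        _ ≤ ‖f^[n + 1] x‖ := by rw [iterate_succ_apply']; exact hf _ hRn
  exact tendsto_atTop_mono hgrowth
    ((tendsto_pow_atTop_atTop_of_one_lt hq).atTop_mul_const hR)

/-- The paper's `P_{c,a}`. -/
noncomputable def critPoly (d : ℕ) (c a w : ℂ) : ℂ :=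
  w ^ d / d - c * w ^ (d - 1) / (d - 1) + a ^ d

section critPoly

variable {d : ℕ} {c a : ℂ}

lemma critPoly_crit (hd : 2 ≤ d) :
    critPoly d c a c = a ^ d - c ^ d / ((d * (d - 1) : ℕ) : ℂ) := by
  have hpow : c * c ^ (d - 1) = c ^ d := by rw [← pow_succ', Nat.sub_add_cancel (by omega)]
  have hd0 : (d : ℂ) ≠ 0 := by norm_cast; omega
  have hd1 : (d : ℂ) - 1 ≠ 0 := by
    rw [sub_ne_zero]; norm_cast; omega
  rw [critPoly, hpow, Nat.cast_mul, Nat.cast_sub (by omega : 1 ≤ d), Nat.cast_one]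
  field_simp
  ring

lemma norm_pow_sub_norm_pow_le_norm_critPoly_crit (hd : 2 ≤ d) :
    ‖a‖ ^ d - ‖c‖ ^ d ≤ ‖critPoly d c a c‖ := by
  have hden : (1 : ℝ) ≤ ((d * (d - 1) : ℕ) : ℝ) := by
    exact_mod_cast Nat.mul_pos (by omega) (by omega)
  have hcd : ‖c ^ d / ((d * (d - 1) : ℕ) : ℂ)‖ ≤ ‖c‖ ^ d := by
    rw [norm_div, norm_pow, Complex.norm_natCast]
    exact div_le_self (by positivity) hden
  calc ‖a‖ ^ d - ‖c‖ ^ d ≤ ‖a ^ d‖ - ‖c ^ d / ((d * (d - 1) : ℕ) : ℂ)‖ := by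
        rw [norm_pow]; linarith
    _ ≤ ‖critPoly d c a c‖ := critPoly_crit (a := a) hd ▸ norm_sub_norm_le _ _

lemma two_mul_norm_le_norm_critPoly (hd : 2 ≤ d) {w : ℂ} (hw : d * (‖c‖ + ‖a‖ + 2) ≤ ‖w‖) :
    2 * ‖w‖ ≤ ‖critPoly d c a w‖ := by
  set t := ‖w‖
  set K := ‖c‖
  set M := ‖a‖
  have hK : 0 ≤ K := norm_nonneg c
  have hM : 0 ≤ M := norm_nonneg a
  have hD : (2 : ℝ) ≤ d := by exact_mod_cast hd
  have htKM : K + M + 2 ≤ t := le_trans (by nlinarith) hw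
  have hpow : t ^ d = t ^ (d - 1) * t := by rw [← pow_succ, Nat.sub_add_cancel (by omega)]
  have hMpow : M ^ d = M * M ^ (d - 1) := by rw [← pow_succ', Nat.sub_add_cancel (by omega)]
  have ht_le : t ≤ t ^ (d - 1) := le_self_pow₀ (by linarith) (by omega)
  have hM_le : M ^ (d - 1) ≤ t ^ (d - 1) := pow_le_pow_left₀ hM (by linarith) _
  have hlead : t ^ (d - 1) * (K + M + 2) ≤ t ^ d / d := by
    rw [hpow, le_div_iff₀ (by linarith), mul_assoc]
    gcongr
    linarith
  have hmid : ‖c * w ^ (d - 1) / ((d : ℂ) - 1)‖ ≤ K * t ^ (d - 1) := by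
    rw [show (d : ℂ) - 1 = ((d - 1 : ℕ) : ℂ) by rw [Nat.cast_sub (by omega), Nat.cast_one],
      norm_div, norm_mul, norm_pow, Complex.norm_natCast]
    exact div_le_self (by positivity) (by norm_cast; omega)
  have htri : ‖w ^ d / d‖ - ‖c * w ^ (d - 1) / ((d : ℂ) - 1)‖ - ‖a ^ d‖ ≤ ‖critPoly d c a w‖ := by
    have := norm_sub_norm_le (w ^ d / d - c * w ^ (d - 1) / ((d : ℂ) - 1)) (-a ^ d)
    have := norm_sub_norm_le (w ^ d / d) (c * w ^ (d - 1) / ((d : ℂ) - 1))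
    rw [norm_neg, sub_neg_eq_add] at *
    unfold critPoly
    linarith
  rw [norm_div, norm_pow, norm_pow, Complex.norm_natCast] at htri
  nlinarith [mul_le_mul_of_nonneg_left hM_le hM]

lemma escapeRadius_le_norm_critPoly_crit (hd : 2 ≤ d) (ha : ‖c‖ ^ d + d * (‖c‖ + 3) < ‖a‖) :
    d * (‖c‖ + ‖a‖ + 2) ≤ ‖critPoly d c a c‖ := by
  set K := ‖c‖
  set M := ‖a‖
  have hK : 0 ≤ K := norm_nonneg c
  have hD : (2 : ℝ) ≤ d := by exact_mod_cast hd
  have hKd : 0 ≤ K ^ d := by positivity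
  have hM : 1 ≤ M := by nlinarith
  have hsq : M ^ 2 ≤ M ^ d := pow_le_pow_right₀ hM hd
  have := norm_pow_sub_norm_pow_le_norm_critPoly_crit (c := c) (a := a) hd
  nlinarith [mul_nonneg (sub_nonneg.mpr hM) (by positivity : 0 ≤ K ^ d + d * K + 2 * d)]

end critPoly

/-- For `P_{c,a}(w) = w^d/d - c·w^{d-1}/(d-1) + a^d` with `d ≥ 3` and `c` fixed, for `|a|`
sufficiently large the orbit of the critical point `c` tends to infinity; in particular `c`
is not preperiodic. -/
theorem critical_point_escapes (d : ℕ) (hd : 3 ≤ d) (c : ℂ) :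
    ∃ A : ℝ, ∀ a : ℂ, A < ‖a‖ →
      ∀ P : ℂ → ℂ, (∀ w, P w = w ^ d / d - c * w ^ (d - 1) / (d - 1) + a ^ d) →
        Tendsto (fun n => ‖P^[n] c‖) atTop atTop ∧
          ¬ ∃ i j : ℕ, i < j ∧ P^[i] c = P^[j] c := by
  refine ⟨‖c‖ ^ d + d * (‖c‖ + 3), fun a ha P hP => ?_⟩
  obtain rfl : P = critPoly d c a := funext hP
  have hd2 : 2 ≤ d := by omega
  have hR : 0 < (d : ℝ) * (‖c‖ + ‖a‖ + 2) := by
    have : (0 : ℝ) < d := by exact_mod_cast (by omega : 0 < d)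
    positivity
  have hescape : Tendsto (fun n => ‖(critPoly d c a)^[n] c‖) atTop atTop := by
    rw [← tendsto_add_atTop_iff_nat 1]
    simp only [iterate_succ_apply]
    exact tendsto_norm_iterate_atTop_of_expanding one_lt_two hR
      (fun _ => two_mul_norm_le_norm_critPoly hd2) (escapeRadius_le_norm_critPoly_crit hd2 ha)
  exact ⟨hescape, not_exists_iterate_eq_of_tendsto_atTop hescape⟩
end

section
/- Let g : ℂ → ℂ be a monic polynomial of degree d ≥ 2. Then the dynamical Green function G(w) = lim_{n→∞} d^{-n} log⁺|gⁿ(w)| exists for every w ∈ ℂ, the limit is uniform on compact sets, and G satisfies G(g(w)) = d·G(w). -/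
/-!
Write `d = deg g` and `c` for its leading coefficient. Since `g(z) ~ c zᵈ` at infinity,
`log⁺|g z| - d log⁺|z|` tends to `log |c|` there; being continuous, it is bounded on all of `ℂ`,
say by `C`. Hence consecutive terms of `d⁻ⁿ log⁺|gⁿ w|` differ by at most `C d⁻ⁿ⁻¹`, uniformly
in `w`, so the sequence converges uniformly, and `G (g w) = d G w` follows by shifting the index.
-/

open Filter Polynomial Topology Bornology Asymptotics Real

theorem Continuous.exists_forall_norm_le_of_tendsto_cocompact {X E : Type*} [TopologicalSpace X]
    [SeminormedAddCommGroup E] {f : X → E} {a : E} (hf : Continuous f)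
    (h : Tendsto f (cocompact X) (𝓝 a)) : ∃ C, ∀ x, ‖f x‖ ≤ C := by
  obtain ⟨K, hK, hKf⟩ := mem_cocompact.1 (h.norm.eventually (gt_mem_nhds (lt_add_one ‖a‖)))
  obtain ⟨C, hC⟩ := hK.exists_bound_of_continuousOn hf.continuousOn
  refine ⟨max C (‖a‖ + 1), fun x => ?_⟩
  by_cases hx : x ∈ K
  · exact (hC x hx).trans (le_max_left _ _)
  · exact (hKf hx).le.trans (le_max_right _ _)

section EscapeRate

variable {X : Type*} {T : X → X} {φ : X → ℝ} {d C : ℝ}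

theorem dist_comp_iterate_div_pow_succ_le (hd : 0 < d) (hφ : ∀ x, |φ (T x) - d * φ x| ≤ C)
    (n : ℕ) (x : X) :
    dist (φ (T^[n] x) / d ^ n) (φ (T^[n + 1] x) / d ^ (n + 1)) ≤ C / d * d⁻¹ ^ n := by
  have hdn : 0 < d ^ (n + 1) := pow_pos hd _
  have hdiff : φ (T^[n] x) / d ^ n - φ (T^[n + 1] x) / d ^ (n + 1)
      = -(φ (T (T^[n] x)) - d * φ (T^[n] x)) / d ^ (n + 1) := by
    rw [Function.iterate_succ_apply']
    field_simp
    ring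
  rw [Real.dist_eq, hdiff, abs_div, abs_neg, abs_of_pos hdn, div_le_iff₀ hdn]
  calc |φ (T (T^[n] x)) - d * φ (T^[n] x)| ≤ C := hφ _
    _ = C / d * d⁻¹ ^ n * d ^ (n + 1) := by rw [inv_pow, pow_succ]; field_simp

theorem exists_tendstoUniformly_comp_iterate_div_pow (hd : 1 < d)
    (hφ : ∀ x, |φ (T x) - d * φ x| ≤ C) :
    ∃ G : X → ℝ, TendstoUniformly (fun n x => φ (T^[n] x) / d ^ n) G atTop ∧
      ∀ x, G (T x) = d * G x := by
  set a : ℕ → X → ℝ := fun n x => φ (T^[n] x) / d ^ n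
  have hr : d⁻¹ < 1 := inv_lt_one_of_one_lt₀ hd
  have hstep := dist_comp_iterate_div_pow_succ_le (zero_lt_one.trans hd) hφ
  have hlim : ∀ x, Tendsto (a · x) atTop (𝓝 (limUnder atTop (a · x))) := fun x =>
    (cauchySeq_of_le_geometric _ _ hr (hstep · x)).tendsto_limUnder
  refine ⟨fun x => limUnder atTop (a · x), ?_, fun x => ?_⟩
  · have hbound : Tendsto (fun n => C / d * d⁻¹ ^ n / (1 - d⁻¹)) atTop (𝓝 0) := by
      simpa using ((tendsto_pow_atTop_nhds_zero_of_lt_one (by positivity) hr).const_mul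
        (C / d)).div_const (1 - d⁻¹)
    rw [Metric.tendstoUniformly_iff]
    intro ε hε
    filter_upwards [hbound.eventually (gt_mem_nhds hε)] with n hn x
    rw [dist_comm]
    exact (dist_le_of_le_geometric_of_tendsto _ _ hr (hstep · x) (hlim x) n).trans_lt hn
  · have hshift : ∀ n, a n (T x) = d * a (n + 1) x := fun n => by
      simp only [a, Function.iterate_succ_apply, pow_succ]
      field_simp
    exact tendsto_nhds_unique ((hlim (T x)).congr hshift)
      (((hlim x).comp (tendsto_add_atTop_nat 1)).const_mul d)

end EscapeRate

namespace Polynomial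

variable {𝕜 : Type*} [NormedField 𝕜]

theorem tendsto_log_norm_eval_sub_mul_log_norm {p : 𝕜[X]} (hp : p ≠ 0) :
    Tendsto (fun z => log ‖p.eval z‖ - p.natDegree * log ‖z‖) (cobounded 𝕜)
      (𝓝 (log ‖p.leadingCoeff‖)) := by
  have hc : p.leadingCoeff ≠ 0 := leadingCoeff_ne_zero.2 hp
  have hz : ∀ᶠ z in cobounded 𝕜, z ≠ 0 :=
    (tendsto_norm_cobounded_atTop.eventually_ne_atTop 0).mono fun z hz => by simpa using hz
  have hratio : Tendsto (fun z => p.eval z / z ^ p.natDegree) (cobounded 𝕜)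
      (𝓝 p.leadingCoeff) := by
    have hone :=
      (isEquivalent_iff_tendsto_one ?_).1 (isEquivalent_cobounded_leading_monomial (P := p))
    · have h := hone.const_mul p.leadingCoeff
      rw [mul_one] at h
      refine h.congr' ?_
      filter_upwards [hz] with z hz
      simp only [Pi.div_apply]
      field_simp
    · filter_upwards [hz] with z hz using mul_ne_zero hc (pow_ne_zero _ hz)
  refine (((continuous_norm.tendsto _).comp hratio).log (norm_ne_zero_iff.2 hc)).congr' ?_
  filter_upwards [hz, hratio.eventually_ne hc] with z hz hpz
  have hpz' : p.eval z ≠ 0 := fun h => hpz (by simp [h])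
  simp only [Function.comp_apply, norm_div, norm_pow]
  rw [log_div (norm_ne_zero_iff.2 hpz') (by positivity), log_pow]

theorem tendsto_posLog_norm_eval_sub_mul_posLog_norm {p : 𝕜[X]} (hp : 0 < p.degree) :
    Tendsto (fun z => log⁺ ‖p.eval z‖ - p.natDegree * log⁺ ‖z‖) (cobounded 𝕜)
      (𝓝 (log ‖p.leadingCoeff‖)) := by
  have hnorm := tendsto_norm_cobounded_atTop (E := 𝕜)
  refine (tendsto_log_norm_eval_sub_mul_log_norm (ne_zero_of_degree_gt hp)).congr' ?_
  filter_upwards [hnorm.eventually_ge_atTop 1,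
    (p.tendsto_norm_atTop hp hnorm).eventually_ge_atTop 1] with z hz hpz
  rw [posLog_eq_log (by rwa [abs_norm]), posLog_eq_log (by rwa [abs_norm])]

theorem exists_abs_posLog_norm_eval_sub_mul_posLog_norm_le [ProperSpace 𝕜] {p : 𝕜[X]}
    (hp : 0 < p.degree) : ∃ C, ∀ z, |log⁺ ‖p.eval z‖ - p.natDegree * log⁺ ‖z‖| ≤ C :=
  Continuous.exists_forall_norm_le_of_tendsto_cocompact (by fun_prop)
    (Metric.cobounded_eq_cocompact (α := 𝕜) ▸ tendsto_posLog_norm_eval_sub_mul_posLog_norm hp)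

end Polynomial

theorem green_function_exists_general (g : Polynomial ℂ)
    (d : ℕ) (hd : d = g.natDegree) (hd2 : 2 ≤ d) :
    ∃ G : ℂ → ℝ,
      TendstoLocallyUniformly
        (fun n w => Real.log (max ‖(fun z => g.eval z)^[n] w‖ 1) / d ^ n)
        G atTop ∧
      ∀ w, G (g.eval w) = d * G w := by
  obtain ⟨C, hC⟩ :=
    g.exists_abs_posLog_norm_eval_sub_mul_posLog_norm_le (natDegree_pos_iff_degree_pos.1 (by omega))
  have hlog (z : ℂ) : Real.log (max ‖z‖ 1) = log⁺ ‖z‖ := by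
    rw [max_comm, posLog_eq_log_max_one (norm_nonneg z)]
  obtain ⟨G, hG, hGg⟩ := exists_tendstoUniformly_comp_iterate_div_pow
    (T := fun z => g.eval z) (φ := fun z => Real.log (max ‖z‖ 1)) (Nat.one_lt_cast.2 hd2)
    (fun z => by simpa only [hlog, ← hd] using hC z)
  exact ⟨G, hG.tendstoLocallyUniformly, hGg⟩

/-- For a monic polynomial `g` of degree `d ≥ 2`, the dynamical Green function
`G(w) = lim d⁻ⁿ log⁺|gⁿ(w)|` exists, the convergence is uniform on compact subsets of ℂ
(i.e. locally uniform), and `G(g(w)) = d·G(w)`. -/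
theorem green_function_exists (g : Polynomial ℂ) (hm : g.Monic)
    (d : ℕ) (hd : d = g.natDegree) (hd2 : 2 ≤ d) :
    ∃ G : ℂ → ℝ,
      TendstoLocallyUniformly
        (fun n w => Real.log (max ‖(fun z => g.eval z)^[n] w‖ 1) / d ^ n)
        G atTop ∧
      ∀ w, G (g.eval w) = d * G w :=
  green_function_exists_general g d hd hd2
end
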